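/- arXiv:1008.3554 — 7 statements merged into one kernel-verified Lean document; each statement's English description precedes it below -/
import Mathlib

section
/- For all natural numbers m and n, the probabilists' Hermite polynomials satisfy the product formula He_m(x)·He_n(x) = ∑_{p=0}^{min(m,n)} binom(m,p)·binom(n,p)·p!·He_{m+n−2p}(x), as an identity of polynomials. -/
/-!
Write `δ f = X f - f'`, so that `He_{k+1} = δ He_k`. The Leibniz rule together with
`He_{n+1}' = (n+1) He_n` gives `He_{m+1} He_{n+1} = δ (He_m He_{n+1}) + (n+1) He_m He_n`, and
induction on `m` reduces the formula to the Pascal-type recurrence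
`c(m+1, n+1, p+1) = c(m, n+1, p+1) + (n+1) c(m, n, p)` for `c(m, n, p) = C(m,p) C(n,p) p!`.
Since `c(m, n, p) = 0` for `p > min m n`, the sum may run over any range `p < N` with
`min m n < N`, which keeps the index bookkeeping free of `min`.
-/

open Finset

namespace Polynomial

theorem derivative_hermite_succ (n : ℕ) :
    derivative (hermite (n + 1)) = ((n : ℤ) + 1) • hermite n := by
  induction n with
  | zero => simp [hermite_zero]
  | succ n ih =>
    rw [hermite_succ (n + 1), derivative_sub, derivative_mul, derivative_X, ih, derivative_smul,
      one_mul, mul_smul_comm, add_sub_assoc, ← smul_sub, ← hermite_succ]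
    push_cast
    module

/-- The Gaussian divergence `δ`, adjoint of `derivative` in `L²` of the standard Gaussian. -/
noncomputable def hermiteRaising : ℤ[X] →ₗ[ℤ] ℤ[X] :=
  LinearMap.mulLeft ℤ X - derivative

theorem hermiteRaising_apply (f : ℤ[X]) : hermiteRaising f = X * f - derivative f := rfl

theorem hermiteRaising_hermite (n : ℕ) : hermiteRaising (hermite n) = hermite (n + 1) :=
  (hermite_succ n).symm

theorem hermite_succ_mul_hermite_succ (m n : ℕ) :
    hermite (m + 1) * hermite (n + 1) =
      hermiteRaising (hermite m * hermite (n + 1)) +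
        ((n : ℤ) + 1) • (hermite m * hermite n) := by
  rw [hermiteRaising_apply, hermite_succ m, derivative_mul, derivative_hermite_succ, mul_smul_comm]
  ring

def hermiteProductCoeff (m n p : ℕ) : ℕ :=
  m.choose p * n.choose p * p.factorial

theorem hermiteProductCoeff_zero (m n : ℕ) : hermiteProductCoeff m n 0 = 1 := by
  simp [hermiteProductCoeff]

theorem hermiteProductCoeff_eq_zero {m n p : ℕ} (h : min m n < p) :
    hermiteProductCoeff m n p = 0 := by
  rcases min_lt_iff.mp h with h | h <;> simp [hermiteProductCoeff, Nat.choose_eq_zero_of_lt h]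

theorem hermiteProductCoeff_succ_succ_succ (m n p : ℕ) :
    hermiteProductCoeff (m + 1) (n + 1) (p + 1) =
      hermiteProductCoeff m (n + 1) (p + 1) + (n + 1) * hermiteProductCoeff m n p := by
  have pascal := Nat.add_one_mul_choose_eq n p
  simp only [hermiteProductCoeff, Nat.choose_succ_succ' m p, Nat.factorial_succ]
  linear_combination (m.choose p * p.factorial) * pascal.symm

noncomputable def hermiteProductTerm (m n p : ℕ) : ℤ[X] :=
  (hermiteProductCoeff m n p : ℤ) • hermite (m + n - 2 * p)

theorem hermiteProductTerm_zero (m n : ℕ) : hermiteProductTerm m n 0 = hermite (m + n) := by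
  simp [hermiteProductTerm, hermiteProductCoeff_zero]

theorem hermiteProductTerm_eq_zero {m n p : ℕ} (h : min m n < p) :
    hermiteProductTerm m n p = 0 := by
  simp [hermiteProductTerm, hermiteProductCoeff_eq_zero h]

-- The truncated subtractions `m + n - 2 * p + 1` and `m + n + 1 - 2 * p` differ only when
-- `m + n < 2 * p`, and then the coefficient vanishes.
theorem hermiteRaising_hermiteProductTerm (m n p : ℕ) :
    hermiteRaising (hermiteProductTerm m n p) =
      (hermiteProductCoeff m n p : ℤ) • hermite (m + n + 1 - 2 * p) := by
  by_cases h : min m n < p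
  · simp [hermiteProductTerm_eq_zero h, hermiteProductCoeff_eq_zero h]
  · rw [hermiteProductTerm, map_zsmul, hermiteRaising_hermite,
      show m + n - 2 * p + 1 = m + n + 1 - 2 * p by omega]

theorem hermiteRaising_hermiteProductTerm_add (m n p : ℕ) :
    hermiteRaising (hermiteProductTerm m (n + 1) (p + 1)) +
        ((n : ℤ) + 1) • hermiteProductTerm m n p =
      hermiteProductTerm (m + 1) (n + 1) (p + 1) := by
  rw [hermiteRaising_hermiteProductTerm, hermiteProductTerm, hermiteProductTerm, smul_smul,
    show m + (n + 1) + 1 - 2 * (p + 1) = m + n - 2 * p by omega,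
    show m + 1 + (n + 1) - 2 * (p + 1) = m + n - 2 * p by omega, ← add_smul,
    hermiteProductCoeff_succ_succ_succ]
  push_cast
  rfl

theorem hermite_mul_hermite_eq_sum_range_of_min_eq_zero {m n N : ℕ} (h : min m n = 0)
    (hN : 0 < N) : hermite m * hermite n = ∑ p ∈ range N, hermiteProductTerm m n p := by
  rw [sum_eq_single_of_mem 0 (mem_range.mpr hN)
    fun p _ hp ↦ hermiteProductTerm_eq_zero (by omega), hermiteProductTerm_zero]
  rcases Nat.min_eq_zero_iff.mp h with rfl | rfl <;> simp [hermite_zero]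

theorem hermite_mul_hermite_eq_sum_range (m n N : ℕ) (hN : min m n < N) :
    hermite m * hermite n = ∑ p ∈ range N, hermiteProductTerm m n p := by
  induction m generalizing n N with
  | zero => exact hermite_mul_hermite_eq_sum_range_of_min_eq_zero (by simp) hN
  | succ m ih =>
    cases n with
    | zero => exact hermite_mul_hermite_eq_sum_range_of_min_eq_zero (by simp) hN
    | succ n =>
      obtain ⟨N, rfl⟩ : ∃ N', N = N' + 1 := Nat.exists_eq_add_one.mpr (by omega)
      rw [hermite_succ_mul_hermite_succ, ih (n + 1) (N + 1) (by omega), ih n N (by omega),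
        map_sum, smul_sum, sum_range_succ', sum_range_succ' (hermiteProductTerm (m + 1) (n + 1)),
        add_right_comm, ← sum_add_distrib]
      congr 1
      · exact sum_congr rfl fun p _ ↦ hermiteRaising_hermiteProductTerm_add m n p
      · rw [hermiteProductTerm_zero, hermiteProductTerm_zero, hermiteRaising_hermite]
        congr 1
        omega

end Polynomial

/-- Product formula for the probabilists' Hermite polynomials:
`He_m · He_n = ∑_{p=0}^{min m n} (m choose p)·(n choose p)·p! · He_{m+n-2p}`. -/
theorem hermite_product_formula (m n : ℕ) :
    Polynomial.hermite m * Polynomial.hermite n =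
      ∑ p ∈ Finset.range (min m n + 1),
        ((m.choose p * n.choose p * p.factorial : ℤ)) • Polynomial.hermite (m + n - 2 * p) := by
  rw [Polynomial.hermite_mul_hermite_eq_sum_range m n _ (Nat.lt_succ_self _)]
  simp [Polynomial.hermiteProductTerm, Polynomial.hermiteProductCoeff]
end

section
/- Let E be a real inner product space, let u and v be families of vectors of E indexed by multi-indices, let z : ℕ → ℝ be finitely supported, and let M ∈ ℕ. Then ∑_{|α|=M} (z^α/√(α!))·(v ◊ u)_α = ∑_{K+L=M} ⟨ ∑_{|β|=K} (z^β/√(β!))·u_β , ∑_{|γ|=L} (z^γ/√(γ!))·v_γ ⟩, where all sums range over multi-indices supported in the support of z (hence are finite sums), and the outer sum on the right is over pairs (K,L) of natural numbers with K+L=M. In particular, for M = 0: (v ◊ u)_0 = ⟨u_0, v_0⟩. -/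
/-!
Expanding both inner products, the right-hand side is a sum of `⟪u β, v γ⟫` over pairs of
multi-indices with `|β| + |γ| = M`, while the left-hand side is a sum of `⟪u β, v (α - β)⟫` over
`|α| = M` and `β ≤ α`. The substitution `α = β + γ` matches the two index sets, and the weights
agree because `z^(β+γ) / √(β+γ)! · √((β+γ)! / (β! γ!)) = (z^β / √β!) · (z^γ / √γ!)`.
-/

open scoped RealInnerProductSpace

/-- The factorial `α! = ∏_k (α_k)!` of a multi-index. -/
def mfact (α : ℕ →₀ ℕ) : ℕ := α.prod fun _ n => n.factorial

/-- The weight `|α| = ∑_k α_k` of a multi-index. -/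
def mdeg (α : ℕ →₀ ℕ) : ℕ := α.sum fun _ n => n

/-- `z^α = ∏_k z_k^{α_k}` (a finite product). -/
def mpow (z : ℕ → ℝ) (α : ℕ →₀ ℕ) : ℝ := α.prod fun k n => z k ^ n

/-- The Wick-product coefficient of two families `v, u` of vectors of a real inner
product space indexed by multi-indices:
`(v ◊ u)_α = ∑_{β ≤ α} √(α!/(β!·(α-β)!)) ⟨u_β, v_{α-β}⟩`. -/
noncomputable def wickCoeff {E : Type*} [NormedAddCommGroup E] [InnerProductSpace ℝ E]
    (v u : (ℕ →₀ ℕ) → E) (α : ℕ →₀ ℕ) : ℝ :=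
  ∑ β ∈ Finset.Iic α,
    Real.sqrt ((mfact α : ℝ) / ((mfact β : ℝ) * (mfact (α - β) : ℝ))) * ⟪u β, v (α - β)⟫

/-- The finite set of multi-indices supported in `s` with weight `M`. -/
noncomputable def degSet (s : Finset ℕ) (M : ℕ) : Finset (ℕ →₀ ℕ) :=
  (Finset.Iic (∑ k ∈ s, Finsupp.single k M)).filter fun α => α.support ⊆ s ∧ mdeg α = M

lemma mdeg_eq_degree (α : ℕ →₀ ℕ) : mdeg α = α.degree := rfl

lemma mdeg_add (α β : ℕ →₀ ℕ) : mdeg (α + β) = mdeg α + mdeg β := by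
  simp only [mdeg_eq_degree, map_add]

lemma mpow_add (z : ℕ → ℝ) (α β : ℕ →₀ ℕ) : mpow z (α + β) = mpow z α * mpow z β :=
  Finsupp.prod_add_index' (fun _ => pow_zero _) (fun _ _ _ => pow_add _ _ _)

lemma mfact_pos (α : ℕ →₀ ℕ) : 0 < mfact α :=
  Finset.prod_pos fun _ _ => Nat.factorial_pos _

lemma mem_degSet {s : Finset ℕ} {M : ℕ} {α : ℕ →₀ ℕ} :
    α ∈ degSet s M ↔ α.support ⊆ s ∧ mdeg α = M := by
  refine Finset.mem_filter.trans (and_iff_right_of_imp ?_)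
  rintro ⟨hs, rfl⟩
  rw [mdeg_eq_degree, Finset.mem_Iic, Finsupp.le_iff]
  intro k hk
  rw [Finsupp.finsetSum_apply, Finset.sum_eq_single_of_mem k (hs hk) fun j _ hjk => by
    simp [hjk]]
  simpa using Finsupp.le_degree k α

lemma add_mem_degSet {s : Finset ℕ} {K L : ℕ} {β γ : ℕ →₀ ℕ}
    (hβ : β ∈ degSet s K) (hγ : γ ∈ degSet s L) : β + γ ∈ degSet s (K + L) := by
  rw [mem_degSet] at *
  exact ⟨Finsupp.support_add.trans (Finset.union_subset hβ.1 hγ.1), by rw [mdeg_add, hβ.2, hγ.2]⟩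

lemma mem_degSet_mdeg_of_le {s : Finset ℕ} {M : ℕ} {α β : ℕ →₀ ℕ}
    (hα : α ∈ degSet s M) (h : β ≤ α) : β ∈ degSet s (mdeg β) :=
  mem_degSet.mpr ⟨(Finsupp.support_mono h).trans (mem_degSet.mp hα).1, rfl⟩

lemma sum_degSet_sum_Iic {R : Type*} [AddCommMonoid R] (s : Finset ℕ) (M : ℕ)
    (f : (ℕ →₀ ℕ) → (ℕ →₀ ℕ) → R) :
    ∑ α ∈ degSet s M, ∑ β ∈ Finset.Iic α, f β (α - β)
      = ∑ KL ∈ Finset.HasAntidiagonal.antidiagonal M,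
          ∑ β ∈ degSet s KL.1, ∑ γ ∈ degSet s KL.2, f β γ := by
  simp_rw [← Finset.sum_product', Finset.sum_sigma']
  refine Finset.sum_nbij' (fun x => ⟨(mdeg x.2, mdeg (x.1 - x.2)), (x.2, x.1 - x.2)⟩)
    (fun y => ⟨y.2.1 + y.2.2, y.2.1⟩) ?_ ?_ ?_ ?_ ?_
  · rintro ⟨α, β⟩ hx
    simp only [Finset.mem_sigma, Finset.mem_Iic] at hx
    have hsplit : β + (α - β) = α := add_tsub_cancel_of_le hx.2
    simp only [Finset.mem_sigma, Finset.HasAntidiagonal.mem_antidiagonal, Finset.mem_product]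
    exact ⟨by rw [← mdeg_add, hsplit, (mem_degSet.mp hx.1).2],
      mem_degSet_mdeg_of_le hx.1 hx.2, mem_degSet_mdeg_of_le hx.1 tsub_le_self⟩
  · rintro ⟨⟨K, L⟩, β, γ⟩ hy
    simp only [Finset.mem_sigma, Finset.HasAntidiagonal.mem_antidiagonal,
      Finset.mem_product] at hy
    simp only [Finset.mem_sigma, Finset.mem_Iic]
    exact ⟨hy.1 ▸ add_mem_degSet hy.2.1 hy.2.2, le_self_add⟩
  · rintro ⟨α, β⟩ hx
    simp only [Finset.mem_sigma, Finset.mem_Iic] at hx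
    simp [add_tsub_cancel_of_le hx.2]
  · rintro ⟨⟨K, L⟩, β, γ⟩ hy
    simp only [Finset.mem_sigma, Finset.HasAntidiagonal.mem_antidiagonal,
      Finset.mem_product, mem_degSet] at hy
    simp [hy.2.1.2, hy.2.2.2]
  · exact fun _ _ => rfl

lemma mpow_div_sqrt_mfact_mul_sqrt (z : ℕ → ℝ) {α β : ℕ →₀ ℕ} (h : β ≤ α) :
    mpow z α / √(mfact α) * √((mfact α : ℝ) / ((mfact β : ℝ) * (mfact (α - β) : ℝ)))
      = mpow z β / √(mfact β) * (mpow z (α - β) / √(mfact (α - β))) := by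
  have hα : (0 : ℝ) < √(mfact α) := Real.sqrt_pos.mpr (mod_cast mfact_pos α)
  have hβ : (0 : ℝ) < √(mfact β) := Real.sqrt_pos.mpr (mod_cast mfact_pos β)
  have hγ : (0 : ℝ) < √(mfact (α - β)) := Real.sqrt_pos.mpr (mod_cast mfact_pos (α - β))
  conv_lhs => rw [← add_tsub_cancel_of_le h, mpow_add, add_tsub_cancel_of_le h]
  rw [Real.sqrt_div' _ (by positivity), Real.sqrt_mul (Nat.cast_nonneg _)]
  field_simp

lemma wickCoeff_zero {E : Type*} [NormedAddCommGroup E] [InnerProductSpace ℝ E]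
    (u v : (ℕ →₀ ℕ) → E) : wickCoeff v u 0 = ⟪u 0, v 0⟫ := by
  rw [wickCoeff, show Finset.Iic (0 : ℕ →₀ ℕ) = {0} from Finset.Iic_bot]
  simp [mfact]

/-- Action of a Wick product on the test random variables `p_M(z)`:
`∑_{|α|=M} (z^α/√α!)(v ◊ u)_α = ∑_{K+L=M} ⟨∑_{|β|=K} (z^β/√β!) u_β, ∑_{|γ|=L} (z^γ/√γ!) v_γ⟩`,
all sums over multi-indices supported in the support of `z`; and in particular for `M = 0`,
`(v ◊ u)_0 = ⟨u_0, v_0⟩`. -/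
theorem wick_action_on_pM {E : Type*} [NormedAddCommGroup E] [InnerProductSpace ℝ E]
    (u v : (ℕ →₀ ℕ) → E) (z : ℕ →₀ ℝ) (M : ℕ) :
    ((∑ α ∈ degSet z.support M, (mpow z α / Real.sqrt (mfact α)) * wickCoeff v u α)
      = ∑ KL ∈ Finset.HasAntidiagonal.antidiagonal M,
          ⟪∑ β ∈ degSet z.support KL.1, (mpow z β / Real.sqrt (mfact β)) • u β,
            ∑ γ ∈ degSet z.support KL.2, (mpow z γ / Real.sqrt (mfact γ)) • v γ⟫)
    ∧ wickCoeff v u 0 = ⟪u 0, v 0⟫ := by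
  refine ⟨?_, wickCoeff_zero u v⟩
  simp_rw [sum_inner, inner_sum, real_inner_smul_left, real_inner_smul_right]
  rw [← sum_degSet_sum_Iic]
  refine Finset.sum_congr rfl fun α _ => ?_
  rw [wickCoeff, Finset.mul_sum]
  refine Finset.sum_congr rfl fun β hβ => ?_
  rw [← mul_assoc, mpow_div_sqrt_mfact_mul_sqrt z (Finset.mem_Iic.mp hβ)]
  ring
end

section
/- Let B ≥ 0 and let a : ℕ → ℝ be a sequence of nonnegative reals satisfying a_n ≤ B·∑_{k=1}^{n−1} a_k·a_{n−k} for every n ≥ 2. Then for every n ≥ 1, a_n ≤ C_{n−1}·B^{n−1}·a_1^n. -/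
/-!
The sequence `b n = C_{n-1} B^{n-1} a_1^n` solves the recursion with equality, because
`C_{n-1} = ∑_{k=1}^{n-1} C_{k-1} C_{n-k-1}` is Segner's recurrence. A strong induction then
shows that any nonnegative subsolution of the recursion lies below any supersolution with the
same first term: each product `a_k a_{n-k}` is bounded by `b_k b_{n-k}` termwise.
-/

open Finset

theorem catalan_pred_eq_sum_Ico {n : ℕ} (hn : 2 ≤ n) :
    catalan (n - 1) = ∑ k ∈ Ico 1 n, catalan (k - 1) * catalan (n - k - 1) := by
  obtain ⟨m, rfl⟩ := Nat.exists_eq_add_of_le' hn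
  rw [sum_Ico_eq_sum_range, show m + 2 - 1 = m + 1 by omega, catalan_succ,
    Fin.sum_univ_eq_sum_range (fun i ↦ catalan i * catalan (m - i))]
  refine sum_congr rfl fun i hi ↦ ?_
  rw [mem_range] at hi
  congr 2 <;> omega

theorem le_of_convolution_sub_super {R : Type*} [Semiring R] [PartialOrder R] [IsOrderedRing R]
    {B : R} (hB : 0 ≤ B) {a b : ℕ → R} (ha : ∀ n, 0 ≤ a n)
    (h₁ : a 1 ≤ b 1)
    (hsub : ∀ n, 2 ≤ n → a n ≤ B * ∑ k ∈ Ico 1 n, a k * a (n - k))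
    (hsuper : ∀ n, 2 ≤ n → B * ∑ k ∈ Ico 1 n, b k * b (n - k) ≤ b n) :
    ∀ n, 1 ≤ n → a n ≤ b n := by
  intro n
  induction n using Nat.strong_induction_on with
  | _ n ih =>
    intro hn
    obtain rfl | hn₂ := hn.eq_or_lt
    · exact h₁
    have hterm : ∀ k ∈ Ico 1 n, a k * a (n - k) ≤ b k * b (n - k) := by
      intro k hk
      rw [mem_Ico] at hk
      have hk' := ih k hk.2 hk.1
      exact mul_le_mul hk' (ih (n - k) (by omega) (by omega)) (ha _) ((ha k).trans hk')
    calc a n ≤ B * ∑ k ∈ Ico 1 n, a k * a (n - k) := hsub n hn₂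
      _ ≤ B * ∑ k ∈ Ico 1 n, b k * b (n - k) :=
        mul_le_mul_of_nonneg_left (sum_le_sum hterm) hB
      _ ≤ b n := hsuper n hn₂

theorem catalan_mul_pow_convolution {R : Type*} [CommSemiring R] (B c : R) {n : ℕ}
    (hn : 2 ≤ n) :
    B * ∑ k ∈ Ico 1 n,
        (catalan (k - 1) * B ^ (k - 1) * c ^ k) *
          (catalan (n - k - 1) * B ^ (n - k - 1) * c ^ (n - k)) =
      catalan (n - 1) * B ^ (n - 1) * c ^ n := by
  have hterm : ∀ k ∈ Ico 1 n,
      (catalan (k - 1) * B ^ (k - 1) * c ^ k) *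
          (catalan (n - k - 1) * B ^ (n - k - 1) * c ^ (n - k)) =
        (catalan (k - 1) * catalan (n - k - 1) : ℕ) * (B ^ (n - 2) * c ^ n) := by
    intro k hk
    rw [mem_Ico] at hk
    have hB : B ^ (k - 1) * B ^ (n - k - 1) = B ^ (n - 2) := by rw [← pow_add]; congr 1; omega
    have hc : c ^ k * c ^ (n - k) = c ^ n := by rw [← pow_add]; congr 1; omega
    push_cast
    rw [← hB, ← hc]
    ring
  rw [sum_congr rfl hterm, ← sum_mul, ← Nat.cast_sum, ← catalan_pred_eq_sum_Ico hn,
    show n - 1 = n - 2 + 1 by omega, pow_succ]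
  ring

/-- Catalan-number bound: if `a_n ≤ B·∑_{k=1}^{n-1} a_k a_{n-k}` for all `n ≥ 2`, with
`a ≥ 0` and `B ≥ 0`, then `a_n ≤ C_{n-1}·B^{n-1}·a_1^n` for all `n ≥ 1`, where `C_m` is
the `m`-th Catalan number. -/
theorem catalan_bound (B : ℝ) (hB : 0 ≤ B) (a : ℕ → ℝ) (ha : ∀ n, 0 ≤ a n)
    (hrec : ∀ n, 2 ≤ n → a n ≤ B * ∑ k ∈ Finset.Ico 1 n, a k * a (n - k)) :
    ∀ n, 1 ≤ n → a n ≤ (catalan (n - 1) : ℝ) * B ^ (n - 1) * a 1 ^ n :=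
  le_of_convolution_sub_super hB ha (by simp) hrec fun n hn ↦
    (catalan_mul_pow_convolution B (a 1) hn).le
end

section
/- Let B ≥ 0 and let L be a family of nonnegative reals indexed by multi-indices, satisfying L_α ≤ B·∑_{γ} L_γ·L_{α−γ} for every multi-index α with |α| ≥ 2, where the sum is over all multi-indices γ ≤ α with 1 ≤ |γ| ≤ |α| − 1. Then for every multi-index α with |α| ≥ 2, L_α ≤ C_{|α|−1}·B^{|α|−1}·(|α|!/α!)·∏_k (L_{ε_k})^{α_k}, where ε_k is the multi-index with a 1 in position k and 0 elsewhere, and |α|!/α! is the multinomial coefficient binom(|α|, α). -/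
/-!
With `ℓ_k = L_{ε_k}`, the majorant `M_α = C_{|α|-1} B^{|α|-1} (|α|!/α!) ∏_k ℓ_k^{α_k}` satisfies
the recursion with equality, so `L ≤ M` by strong induction on `|α|` (the two agree at `|α| = 1`).
The equality rests on two convolution identities: the multinomial Vandermonde identity
`∑_{γ ≤ α, |γ| = j} (j!/γ!) ((|α|-j)!/(α-γ)!) = |α|!/α!`, which compares the coefficients of `X^α`
in `P^j P^{|α|-j} = P^{|α|}` for `P = ∑_{k ∈ supp α} X_k`, and Segner's recurrence
`C_{n+1} = ∑_{i ≤ n} C_i C_{n-i}`.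
-/

open Finset

theorem catalan_succ_eq_sum_Icc (n : ℕ) :
    catalan (n + 1) = ∑ j ∈ Icc 1 (n + 1), catalan (j - 1) * catalan (n + 1 - j) := by
  rw [catalan_succ', Nat.sum_antidiagonal_eq_sum_range_succ_mk, ← Finset.Ico_add_one_right_eq_Icc,
    sum_Ico_eq_sum_range]
  refine Finset.sum_congr (by simp) fun k hk => ?_
  rw [mem_range] at hk
  congr 2 <;> omega

namespace Finsupp

variable {σ : Type*}

theorem prod_pow_mul_prod_pow_tsub {M : Type*} [CommMonoid M] (ℓ : σ → M) {α γ : σ →₀ ℕ}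
    (h : γ ≤ α) :
    (γ.prod fun k m => ℓ k ^ m) * (α - γ).prod (fun k m => ℓ k ^ m) =
      α.prod fun k m => ℓ k ^ m := by
  rw [← prod_add_index' (fun _ => pow_zero _) (fun _ => pow_add _), add_tsub_cancel_of_le h]

variable [DecidableEq σ]

theorem sum_antidiagonal_eq_sum_Iic {M : Type*} [AddCommMonoid M] (α : σ →₀ ℕ)
    (f : (σ →₀ ℕ) × (σ →₀ ℕ) → M) :
    ∑ p ∈ antidiagonal α, f p = ∑ γ ∈ Iic α, f (γ, α - γ) := by
  refine sum_nbij' Prod.fst (fun γ => (γ, α - γ)) ?_ ?_ ?_ (fun _ _ => rfl) ?_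
  all_goals
    rintro p hp
    simp only [HasAntidiagonal.mem_antidiagonal, mem_Iic] at hp
    first | simp [← hp] | simp [add_tsub_cancel_of_le hp]

theorem sum_Iic_multinomial_mul_multinomial_tsub (α : σ →₀ ℕ) {j : ℕ}
    (hj : j ≤ α.degree) :
    ∑ γ ∈ Iic α with γ.degree = j, γ.multinomial * (α - γ).multinomial = α.multinomial := by
  set P : MvPolynomial σ ℕ :=
    (indicator α.support fun _ _ => 1 : σ →₀ ℕ).linearCombination ℕ MvPolynomial.X
  have hcoeff : ∀ γ ≤ α, ∀ n, MvPolynomial.coeff γ (P ^ n) =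
      if γ.degree = n then γ.multinomial else 0 := by
    intro γ hγ n
    have hprod : γ.prod (fun r m => (indicator α.support fun _ _ => 1 : σ →₀ ℕ) r ^ m) = 1 :=
      Finset.prod_eq_one fun r hr => by
        simp only [indicator_of_mem (support_mono hγ hr), one_pow]
    rw [MvPolynomial.coeff_linearCombination_X_pow, hprod, Nat.cast_id, mul_one]
    rfl
  have := congrArg (MvPolynomial.coeff α) (pow_mul_pow_sub P hj)
  rw [MvPolynomial.coeff_mul, sum_antidiagonal_eq_sum_Iic, hcoeff α le_rfl, if_pos rfl] at this
  rw [← this, sum_filter]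
  refine Finset.sum_congr rfl fun γ hγ => ?_
  rw [mem_Iic] at hγ
  have hdeg : γ.degree + (α - γ).degree = α.degree := by
    rw [← map_add, add_tsub_cancel_of_le hγ]
  rw [hcoeff γ hγ, hcoeff (α - γ) tsub_le_self]
  split_ifs <;> omega

theorem sum_Iic_catalan_mul_multinomial (α : σ →₀ ℕ) (hα : 2 ≤ α.degree) :
    ∑ γ ∈ Iic α with 1 ≤ γ.degree ∧ γ.degree ≤ α.degree - 1,
        (catalan (γ.degree - 1) * γ.multinomial) *
          (catalan ((α - γ).degree - 1) * (α - γ).multinomial) =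
      catalan (α.degree - 1) * α.multinomial := by
  obtain ⟨n, hn⟩ : ∃ n, α.degree = n + 2 := ⟨α.degree - 2, by omega⟩
  have hmaps : ∀ γ ∈ {γ ∈ Iic α | 1 ≤ γ.degree ∧ γ.degree ≤ α.degree - 1},
      γ.degree ∈ Icc 1 (n + 1) := by
    intro γ hγ
    simp only [mem_filter] at hγ
    simp only [mem_Icc]
    omega
  rw [← sum_fiberwise_of_maps_to hmaps, hn, show n + 2 - 1 = n + 1 by omega,
    catalan_succ_eq_sum_Icc, Finset.sum_mul]
  refine Finset.sum_congr rfl fun j hj => ?_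
  rw [mem_Icc] at hj
  have hfiber : {γ ∈ {γ ∈ Iic α | 1 ≤ γ.degree ∧ γ.degree ≤ n + 1} | γ.degree = j} =
      {γ ∈ Iic α | γ.degree = j} := by
    rw [filter_filter]
    exact filter_congr fun γ _ => ⟨fun h => h.2, fun h => ⟨by omega, h⟩⟩
  rw [hfiber, ← sum_Iic_multinomial_mul_multinomial_tsub α (j := j) (by omega), Finset.mul_sum]
  refine Finset.sum_congr rfl fun γ hγ => ?_
  simp only [mem_filter, mem_Iic] at hγ
  have hdeg : (α - γ).degree = n + 2 - j := by
    rw [← map_tsub_of_le degree α γ hγ.1, hn, hγ.2]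
  rw [hγ.2, hdeg, show n + 2 - j - 1 = n + 1 - j by omega]
  ring

theorem le_of_convolution_bounds (B : ℝ) (hB : 0 ≤ B) {L M : (σ →₀ ℕ) → ℝ}
    (hL : ∀ α, 0 ≤ L α) (hM : ∀ α, 0 ≤ M α) (hbase : ∀ α, α.degree = 1 → L α ≤ M α)
    (hLrec : ∀ α, 2 ≤ α.degree →
      L α ≤ B * ∑ γ ∈ Iic α with 1 ≤ γ.degree ∧ γ.degree ≤ α.degree - 1, L γ * L (α - γ))
    (hMrec : ∀ α, 2 ≤ α.degree →
      B * ∑ γ ∈ Iic α with 1 ≤ γ.degree ∧ γ.degree ≤ α.degree - 1, M γ * M (α - γ) ≤ M α) :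
    ∀ α, 1 ≤ α.degree → L α ≤ M α := by
  intro α hα
  induction h : α.degree using Nat.strong_induction_on generalizing α with
  | _ n ih =>
    obtain rfl | hn := (show n = 1 ∨ 2 ≤ n by omega)
    · exact hbase α h
    calc L α ≤ B * ∑ γ ∈ Iic α with 1 ≤ γ.degree ∧ γ.degree ≤ α.degree - 1, L γ * L (α - γ) :=
          hLrec α (h ▸ hn)
      _ ≤ B * ∑ γ ∈ Iic α with 1 ≤ γ.degree ∧ γ.degree ≤ α.degree - 1, M γ * M (α - γ) := by
          refine mul_le_mul_of_nonneg_left (Finset.sum_le_sum fun γ hγ => ?_) hB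
          simp only [mem_filter, mem_Iic] at hγ
          have hdeg := map_tsub_of_le degree α γ hγ.1
          exact mul_le_mul (ih _ (by omega) γ hγ.2.1 rfl) (ih _ (by omega) (α - γ) (by omega) rfl)
            (hL _) (hM _)
      _ ≤ M α := hMrec α (h ▸ hn)

end Finsupp

open Finsupp

section CatalanMajorant

variable {σ : Type*}

noncomputable def catalanMajorant (B : ℝ) (ℓ : σ → ℝ) (α : σ →₀ ℕ) : ℝ :=
  catalan (α.degree - 1) * B ^ (α.degree - 1) * α.multinomial * α.prod fun k m => ℓ k ^ m

theorem catalanMajorant_nonneg {B : ℝ} (hB : 0 ≤ B) {ℓ : σ → ℝ} (hℓ : ∀ k, 0 ≤ ℓ k)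
    (α : σ →₀ ℕ) : 0 ≤ catalanMajorant B ℓ α := by
  unfold catalanMajorant
  have := Finset.prod_nonneg fun k (_ : k ∈ α.support) => pow_nonneg (hℓ k) (α k)
  positivity

theorem catalanMajorant_single_one (B : ℝ) (ℓ : σ → ℝ) (k : σ) :
    catalanMajorant B ℓ (single k 1) = ℓ k := by
  simp [catalanMajorant, multinomial_eq]

variable [DecidableEq σ]

theorem catalanMajorant_eq_sum (B : ℝ) (ℓ : σ → ℝ) (α : σ →₀ ℕ) (hα : 2 ≤ α.degree) :
    catalanMajorant B ℓ α = B * ∑ γ ∈ Iic α with 1 ≤ γ.degree ∧ γ.degree ≤ α.degree - 1,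
      catalanMajorant B ℓ γ * catalanMajorant B ℓ (α - γ) := by
  have hterm : ∀ γ ∈ {γ ∈ Iic α | 1 ≤ γ.degree ∧ γ.degree ≤ α.degree - 1},
      catalanMajorant B ℓ γ * catalanMajorant B ℓ (α - γ) =
        ((catalan (γ.degree - 1) * γ.multinomial *
            (catalan ((α - γ).degree - 1) * (α - γ).multinomial) : ℕ) : ℝ) *
          (B ^ (α.degree - 2) * α.prod fun k m => ℓ k ^ m) := by
    intro γ hγ
    simp only [mem_filter, mem_Iic] at hγ
    have hdeg := map_tsub_of_le degree α γ hγ.1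
    rw [← prod_pow_mul_prod_pow_tsub ℓ hγ.1,
      show α.degree - 2 = (γ.degree - 1) + ((α - γ).degree - 1) by omega, pow_add]
    unfold catalanMajorant
    push_cast
    ring
  obtain ⟨n, hn⟩ : ∃ n, α.degree = n + 2 := ⟨α.degree - 2, by omega⟩
  rw [Finset.sum_congr rfl hterm, ← Finset.sum_mul, ← Nat.cast_sum,
    sum_Iic_catalan_mul_multinomial α hα, catalanMajorant, hn]
  push_cast
  ring

end CatalanMajorant

/-- Multi-index Catalan bound: if `L ≥ 0` satisfies
`L_α ≤ B·∑_{γ ≤ α, 1 ≤ |γ| ≤ |α|-1} L_γ·L_{α-γ}` for every multi-index `α` with `|α| ≥ 2`,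
then `L_α ≤ C_{|α|-1}·B^{|α|-1}·(|α|!/α!)·∏_k L_{ε_k}^{α_k}` for every such `α`,
where `C_m` is the `m`-th Catalan number and `|α|!/α!` the multinomial coefficient. -/
theorem multiindex_catalan_bound (B : ℝ) (hB : 0 ≤ B)
    (L : (ℕ →₀ ℕ) → ℝ) (hL : ∀ α, 0 ≤ L α)
    (hrec : ∀ α : ℕ →₀ ℕ, 2 ≤ mdeg α →
      L α ≤ B * ∑ γ ∈ (Finset.Iic α).filter (fun γ => 1 ≤ mdeg γ ∧ mdeg γ ≤ mdeg α - 1),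
        L γ * L (α - γ)) :
    ∀ α : ℕ →₀ ℕ, 2 ≤ mdeg α →
      L α ≤ (catalan (mdeg α - 1) : ℝ) * B ^ (mdeg α - 1) *
        (Nat.multinomial α.support α : ℝ) *
        α.prod fun k m => L (Finsupp.single k 1) ^ m := by
  intro α hα
  -- `mdeg` is `Finsupp.degree` and `Nat.multinomial α.support α` is `α.multinomial` definitionally
  refine le_of_convolution_bounds B hB hL (catalanMajorant_nonneg hB fun k => hL _) ?_ hrec
    (fun β hβ => (catalanMajorant_eq_sum B _ β hβ).ge) α (one_le_two.trans hα)
  intro β hβ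
  obtain ⟨k, rfl⟩ := (sum_eq_one_iff β).mp hβ
  rw [catalanMajorant_single_one]
end

section
/- Let B, K ≥ 0 and define, for every multi-index α with |α| ≥ 2, L_α = √(α!)·C_{|α|−1}·(|α|!/α!)·B^{|α|−1}·K^{|α|}. Then there exists q > 1 such that ∑_{α : |α| ≥ 2} (∏_k (2k)^{−2q·α_k})·L_α²/|α|! < ∞, the sum being over all multi-indices of weight at least 2. -/
/-!
Put `x_k = (2k)^{-2q}`. Since `α! · (|α|! / α!) = |α|!`, the summand equals
`(C_{|α|-1} B^{|α|-1} K^{|α|})² · (|α|! / α!) · ∏_k x_k^{α_k}`. By the multinomial theorem the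
terms of weight `m` add up to at most `(C_{m-1} B^{m-1} K^m)² (∑_k x_k)^m`, and `C_n ≤ 4^n`, so the
series is dominated by a geometric series of ratio `16 B² K² ∑_k x_k`. This ratio is `< 1` for
large `q`, because `∑_k (2k)^{-2q} ≤ 4^{-q} ∑_k k^{-2}` for `q ≥ 1`.
-/

open Finset Filter Topology

theorem catalan_le_four_pow (n : ℕ) : catalan n ≤ 4 ^ n :=
  (catalan_eq_centralBinom_div n ▸ Nat.div_le_self _ _).trans (Nat.centralBinom_le_four_pow n)

theorem summable_catalan_sq_mul_pow {t : ℝ} (ht : 0 ≤ t) (h16 : 16 * t < 1) :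
    Summable fun n => (catalan n : ℝ) ^ 2 * t ^ n := by
  refine (summable_geometric_of_lt_one (by positivity) h16).of_nonneg_of_le
    (fun n => by positivity) fun n => ?_
  have hcat : (catalan n : ℝ) ^ 2 ≤ 16 ^ n :=
    calc (catalan n : ℝ) ^ 2 ≤ ((4 : ℝ) ^ n) ^ 2 := by
          gcongr
          exact_mod_cast catalan_le_four_pow n
      _ = 16 ^ n := by rw [← pow_mul, mul_comm, pow_mul]; norm_num
  rw [mul_pow]
  gcongr

namespace Finsupp

variable {ι : Type*}

theorem sum_multinomial_mul_prod_pow_le {x : ι → ℝ} (hx : 0 ≤ x) (hs : Summable x)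
    {U : Finset (ι →₀ ℕ)} {m : ℕ} (hU : ∀ α ∈ U, α.degree = m) :
    ∑ α ∈ U, (α.multinomial : ℝ) * α.prod (fun k n => x k ^ n) ≤ (∑' k, x k) ^ m := by
  classical
  set T := U.sup support
  have hT : ∀ α ∈ U, α.support ⊆ T := fun α hα => le_sup hα
  have hUT : U.image (⇑) ⊆ T.piAntidiag m := by
    simp only [subset_iff, mem_image, mem_piAntidiag]
    rintro _ ⟨α, hα, rfl⟩
    refine ⟨?_, fun i hi => hT α hα (mem_support_iff.mpr hi)⟩
    rw [← hU α hα, degree_apply]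
    exact (sum_subset (hT α hα) fun i _ hi => notMem_support_iff.mp hi).symm
  calc ∑ α ∈ U, (α.multinomial : ℝ) * α.prod (fun k n => x k ^ n)
      = ∑ f ∈ U.image (⇑), (Nat.multinomial T f : ℝ) * ∏ k ∈ T, x k ^ f k := by
        rw [sum_image DFunLike.coe_injective.injOn]
        refine Finset.sum_congr rfl fun α hα => ?_
        rw [multinomial_eq_of_support_subset (hT α hα),
          prod_of_support_subset _ (hT α hα) _ fun _ _ => pow_zero _]
    _ ≤ ∑ f ∈ T.piAntidiag m, (Nat.multinomial T f : ℝ) * ∏ k ∈ T, x k ^ f k :=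
        sum_le_sum_of_subset_of_nonneg hUT fun f _ _ =>
          mul_nonneg (Nat.cast_nonneg _) (prod_nonneg fun k _ => pow_nonneg (hx k) _)
    _ = (∑ k ∈ T, x k) ^ m := (sum_pow_eq_sum_piAntidiag _ _ _).symm
    _ ≤ (∑' k, x k) ^ m :=
        pow_le_pow_left₀ (Finset.sum_nonneg fun k _ => hx k) (hs.sum_le_tsum _ fun k _ => hx k) m

theorem summable_mul_multinomial_mul_prod_pow {x : ι → ℝ} (hx : 0 ≤ x) (hs : Summable x)
    {w : ℕ → ℝ} (hw : 0 ≤ w) (hws : Summable fun m => w m * (∑' k, x k) ^ m) :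
    Summable fun α : ι →₀ ℕ => w α.degree * (α.multinomial * α.prod fun k n => x k ^ n) := by
  classical
  refine summable_of_sum_le (c := ∑' m, w m * (∑' k, x k) ^ m)
    (fun α => mul_nonneg (hw _) (mul_nonneg (Nat.cast_nonneg _)
      (prod_nonneg fun k _ => pow_nonneg (hx k) _))) fun U => ?_
  calc ∑ α ∈ U, w α.degree * (α.multinomial * α.prod fun k n => x k ^ n)
      = ∑ m ∈ U.image degree, w m *
          ∑ α ∈ U with α.degree = m, (α.multinomial * α.prod fun k n => x k ^ n) := by
        rw [← sum_fiberwise_of_maps_to fun α hα => mem_image_of_mem degree hα]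
        refine Finset.sum_congr rfl fun m _ => ?_
        rw [Finset.mul_sum]
        exact Finset.sum_congr rfl fun α hα => by rw [(mem_filter.mp hα).2]
    _ ≤ ∑ m ∈ U.image degree, w m * (∑' k, x k) ^ m :=
        Finset.sum_le_sum fun m _ => mul_le_mul_of_nonneg_left
          (sum_multinomial_mul_prod_pow_le hx hs fun α hα => (mem_filter.mp hα).2) (hw m)
    _ ≤ ∑' m, w m * (∑' k, x k) ^ m :=
        hws.sum_le_tsum _ fun m _ => mul_nonneg (hw m) (pow_nonneg (tsum_nonneg hx) m)

end Finsupp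

theorem mfact_mul_multinomial (α : ℕ →₀ ℕ) : mfact α * α.multinomial = (mdeg α).factorial :=
  Nat.multinomial_spec _ _

theorem prod_rpow_mul_sq_div_factorial_eq (q a b c : ℝ) (α : ℕ →₀ ℕ) :
    (∏ k ∈ α.support, (2 * (k : ℝ)) ^ (-(2 * q * ((α k : ℕ) : ℝ)))) *
        (√(mfact α) * a * (Nat.multinomial α.support α : ℝ) * b * c) ^ 2 /
          (Nat.factorial (mdeg α) : ℝ) =
      (a * b * c) ^ 2 * (α.multinomial * α.prod fun k n => ((2 * k : ℝ) ^ (-(2 * q))) ^ n) := by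
  have hprod : ∏ k ∈ α.support, (2 * (k : ℝ)) ^ (-(2 * q * ((α k : ℕ) : ℝ))) =
      α.prod fun k n => ((2 * k : ℝ) ^ (-(2 * q))) ^ n :=
    Finset.prod_congr rfl fun k _ => by
      change _ = ((2 * (k : ℝ)) ^ (-(2 * q))) ^ (α k)
      rw [← Real.rpow_natCast, ← Real.rpow_mul (by positivity), neg_mul]
  have hfact : (mfact α : ℝ) * α.multinomial = (mdeg α).factorial := by
    exact_mod_cast mfact_mul_multinomial α
  have hmfact : (mfact α : ℝ) ≠ 0 :=
    Nat.cast_ne_zero.mpr (prod_ne_zero_iff.mpr fun _ _ => Nat.factorial_ne_zero _)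
  rw [hprod, ← hfact, mul_pow, mul_pow, mul_pow, mul_pow, Real.sq_sqrt (Nat.cast_nonneg _),
    ← Finsupp.multinomial_eq]
  field_simp

theorem two_mul_natCast_rpow_neg_le {q : ℝ} (hq : 1 ≤ q) (k : ℕ) :
    (2 * k : ℝ) ^ (-(2 * q)) ≤ 4 ^ (-q) * (k : ℝ) ^ (-2 : ℝ) := by
  rcases k.eq_zero_or_pos with rfl | hk
  · norm_num [Real.zero_rpow (by linarith : -(2 * q) ≠ 0)]
  rw [Real.mul_rpow zero_le_two k.cast_nonneg,
    show (4 : ℝ) = 2 ^ (2 : ℝ) by norm_num, ← Real.rpow_mul zero_le_two, mul_neg]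
  gcongr
  · exact_mod_cast hk
  · linarith

theorem summable_two_mul_natCast_rpow_neg {q : ℝ} (hq : 1 ≤ q) :
    Summable fun k : ℕ => (2 * k : ℝ) ^ (-(2 * q)) :=
  ((Real.summable_nat_rpow.mpr (by norm_num)).mul_left _).of_nonneg_of_le
    (fun k => by positivity) (two_mul_natCast_rpow_neg_le hq)

theorem tendsto_tsum_two_mul_natCast_rpow_neg :
    Tendsto (fun q : ℝ => ∑' k : ℕ, (2 * k : ℝ) ^ (-(2 * q))) atTop (𝓝 0) := by
  have hc : Summable fun k : ℕ => (k : ℝ) ^ (-2 : ℝ) := Real.summable_nat_rpow.mpr (by norm_num)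
  have h4 : Tendsto (fun q : ℝ => (4 : ℝ) ^ (-q) * ∑' k : ℕ, (k : ℝ) ^ (-2 : ℝ)) atTop (𝓝 0) := by
    have := (tendsto_rpow_atTop_of_base_lt_one (1 / 4) (by norm_num) (by norm_num)).mul_const
      (∑' k : ℕ, (k : ℝ) ^ (-2 : ℝ))
    rw [zero_mul] at this
    refine this.congr fun q => ?_
    rw [Real.rpow_neg (by norm_num), Real.div_rpow zero_le_one (by norm_num), Real.one_rpow,
      one_div]
  refine tendsto_of_tendsto_of_tendsto_of_le_of_le' tendsto_const_nhds h4
    (Eventually.of_forall fun q => tsum_nonneg fun k => by positivity) ?_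
  filter_upwards [eventually_ge_atTop 1] with q hq
  rw [← tsum_mul_left]
  exact (summable_two_mul_natCast_rpow_neg hq).tsum_le_tsum (two_mul_natCast_rpow_neg_le hq)
    (hc.mul_left _)

theorem kondratiev_weight_summable_general (B K : ℝ) :
    ∃ q : ℝ, 1 < q ∧
      Summable (fun α : {α : ℕ →₀ ℕ // 2 ≤ mdeg α} =>
        (∏ k ∈ (α : ℕ →₀ ℕ).support,
            (2 * (k : ℝ)) ^ (-(2 * q * (((α : ℕ →₀ ℕ) k : ℕ) : ℝ)))) *
          (Real.sqrt (mfact (α : ℕ →₀ ℕ)) * (catalan (mdeg (α : ℕ →₀ ℕ) - 1) : ℝ) *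
              (Nat.multinomial (α : ℕ →₀ ℕ).support (α : ℕ →₀ ℕ) : ℝ) *
              B ^ (mdeg (α : ℕ →₀ ℕ) - 1) * K ^ mdeg (α : ℕ →₀ ℕ)) ^ 2 /
          (Nat.factorial (mdeg (α : ℕ →₀ ℕ)) : ℝ)) := by
  set S : ℝ → ℝ := fun q => ∑' k : ℕ, (2 * k : ℝ) ^ (-(2 * q))
  obtain ⟨q, hsmall, hq⟩ := (((tendsto_tsum_two_mul_natCast_rpow_neg.const_mul
    (16 * (B * K) ^ 2)).eventually (gt_mem_nhds (show 16 * (B * K) ^ 2 * 0 < 1 by simp))).and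
      (eventually_gt_atTop 1)).exists
  refine ⟨q, hq, ?_⟩
  have hS : 0 ≤ S q := tsum_nonneg fun k => by positivity
  have hw : Summable fun m => ((catalan (m - 1) : ℝ) * B ^ (m - 1) * K ^ m) ^ 2 * S q ^ m := by
    refine (summable_nat_add_iff 1).mp ?_
    refine ((summable_catalan_sq_mul_pow (t := (B * K) ^ 2 * S q) (by positivity)
      (by linarith)).mul_right (K ^ 2 * S q)).congr fun n => ?_
    simp only [Nat.add_sub_cancel]
    ring
  refine ((Finsupp.summable_mul_multinomial_mul_prod_pow (fun k => by positivity)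
    (summable_two_mul_natCast_rpow_neg hq.le) (fun m => sq_nonneg _) hw).subtype
      {α | 2 ≤ mdeg α}).congr fun α => ?_
  exact (prod_rpow_mul_sq_div_factorial_eq q _ _ _ α.1).symm

/-- For `L_α = √(α!)·C_{|α|-1}·(|α|!/α!)·B^{|α|-1}·K^{|α|}` there is an exponent `q > 1`
such that `∑_{|α| ≥ 2} (∏_k (2k)^{-2q·α_k})·L_α²/|α|! < ∞`. -/
theorem kondratiev_weight_summable (B K : ℝ) (hB : 0 ≤ B) (hK : 0 ≤ K) :
    ∃ q : ℝ, 1 < q ∧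
      Summable (fun α : {α : ℕ →₀ ℕ // 2 ≤ mdeg α} =>
        (∏ k ∈ (α : ℕ →₀ ℕ).support,
            (2 * (k : ℝ)) ^ (-(2 * q * (((α : ℕ →₀ ℕ) k : ℕ) : ℝ)))) *
          (Real.sqrt (mfact (α : ℕ →₀ ℕ)) * (catalan (mdeg (α : ℕ →₀ ℕ) - 1) : ℝ) *
              (Nat.multinomial (α : ℕ →₀ ℕ).support (α : ℕ →₀ ℕ) : ℝ) *
              B ^ (mdeg (α : ℕ →₀ ℕ) - 1) * K ^ mdeg (α : ℕ →₀ ℕ)) ^ 2 /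
          (Nat.factorial (mdeg (α : ℕ →₀ ℕ)) : ℝ)) :=
  kondratiev_weight_summable_general B K
end

section
/- For every real q > 1, the family α ↦ ∏_k (2k)^{−q·α_k}, indexed by all multi-indices α, is summable: ∑'_{α} ∏_k (2k)^{−q·α_k} < ∞. -/
/-!
Writing `f k = (2k)^{-q}`, the weight of `α` is `∏_k f_k^{α_k}`. Any finite set of multi-indices
lies in a finite box of multi-indices, over which the sum of these products factorises as
`∏_k ∑_n f_k^n`. Each geometric factor is at most `(1 - f_k)⁻¹ ≤ exp (f_k / (1 - c))`, where
`c = 2^{-q} < 1` bounds every `f_k`, so all partial sums are bounded by `exp ((∑ f) / (1 - c))`,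
which is finite because `∑_k k^{-q}` converges for `q > 1`.
-/

open Finset Real

theorem Finset.sum_finsupp_prod_eq_prod_sum {ι α R : Type*} [Zero α] [CommSemiring R]
    (s : Finset ι) (t : ι → Finset α) (g : ι → α → R) :
    ∑ x ∈ s.finsupp t, ∏ i ∈ s, g i (x i) = ∏ i ∈ s, ∑ a ∈ t i, g i a := by
  classical
  rw [prod_sum, Finset.finsupp, sum_map]
  refine sum_congr rfl fun p _ => ?_
  rw [← prod_attach s]
  refine prod_congr rfl fun i _ => ?_
  simp [Finsupp.indicator_of_mem i.2]

theorem sum_pow_le_exp_div_one_sub {x c : ℝ} (hx : 0 ≤ x) (hxc : x ≤ c) (hc : c < 1)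
    (t : Finset ℕ) : ∑ n ∈ t, x ^ n ≤ exp (x / (1 - c)) := by
  have hx1 : x < 1 := hxc.trans_lt hc
  calc ∑ n ∈ t, x ^ n
      ≤ ∑' n, x ^ n := (summable_geometric_of_lt_one hx hx1).sum_le_tsum t fun n _ => by positivity
    _ = 1 + x / (1 - x) := by
        rw [tsum_geometric_of_lt_one hx hx1]
        field_simp [(sub_pos.2 hx1).ne']
        ring
    _ ≤ 1 + x / (1 - c) := by gcongr
    _ ≤ exp (x / (1 - c)) := by linarith [add_one_le_exp (x / (1 - c))]

theorem summable_finsupp_prod_pow {ι : Type*} {f : ι → ℝ} {c : ℝ} (hf0 : ∀ i, 0 ≤ f i)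
    (hfc : ∀ i, f i ≤ c) (hc : c < 1) (hf : Summable f) :
    Summable fun α : ι →₀ ℕ => α.prod fun i n => f i ^ n := by
  classical
  refine summable_of_sum_le (c := exp ((∑' i, f i) / (1 - c)))
    (fun α => prod_nonneg fun i _ => pow_nonneg (hf0 i) _) fun S => ?_
  set s := S.biUnion Finsupp.support
  set t : ι → Finset ℕ := fun i => S.image (· i)
  have hS : S ⊆ s.finsupp t := fun α hα =>
    mem_finsupp_iff.2 ⟨subset_biUnion_of_mem _ hα, fun i _ => mem_image_of_mem _ hα⟩
  calc ∑ α ∈ S, α.prod (fun i n => f i ^ n)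
      = ∑ α ∈ S, ∏ i ∈ s, f i ^ α i := sum_congr rfl fun α hα =>
        Finsupp.prod_of_support_subset _ (subset_biUnion_of_mem _ hα) _ fun i _ => pow_zero _
    _ ≤ ∑ α ∈ s.finsupp t, ∏ i ∈ s, f i ^ α i :=
        sum_le_sum_of_subset_of_nonneg hS fun α _ _ => prod_nonneg fun i _ => pow_nonneg (hf0 i) _
    _ = ∏ i ∈ s, ∑ n ∈ t i, f i ^ n := sum_finsupp_prod_eq_prod_sum s t _
    _ ≤ ∏ i ∈ s, exp (f i / (1 - c)) :=
        prod_le_prod (fun i _ => sum_nonneg fun n _ => pow_nonneg (hf0 i) _)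
          fun i _ => sum_pow_le_exp_div_one_sub (hf0 i) (hfc i) hc (t i)
    _ = exp ((∑ i ∈ s, f i) / (1 - c)) := by rw [← exp_sum, sum_div]
    _ ≤ exp ((∑' i, f i) / (1 - c)) := by
        gcongr
        exact hf.sum_le_tsum s fun i _ => hf0 i

theorem Real.natCast_rpow_le_one_of_neg {y : ℝ} (hy : y < 0) (n : ℕ) : (n : ℝ) ^ y ≤ 1 := by
  rcases n.eq_zero_or_pos with rfl | hn
  · simp [zero_rpow hy.ne]
  · exact rpow_le_one_of_one_le_of_nonpos (by exact_mod_cast hn) hy.le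

/-- For every `q > 1`, the Kondratiev weights `(2ℕ)^{-qα} = ∏_k (2k)^{-q·α_k}`, indexed by
all multi-indices `α : ℕ →₀ ℕ`, form a summable family. -/
theorem kondratiev_weights_summable (q : ℝ) (hq : 1 < q) :
    Summable (fun α : ℕ →₀ ℕ =>
      ∏ k ∈ α.support, (2 * (k : ℝ)) ^ (-(q * ((α k : ℕ) : ℝ)))) := by
  have hweight (α : ℕ →₀ ℕ) : ∏ k ∈ α.support, (2 * (k : ℝ)) ^ (-(q * ((α k : ℕ) : ℝ))) =
      α.prod fun k n => (2 ^ (-q) * (k : ℝ) ^ (-q)) ^ n :=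
    prod_congr rfl fun k _ => by
      rw [← neg_mul, rpow_mul_natCast (by positivity), mul_rpow (by norm_num) k.cast_nonneg]
  simp_rw [hweight]
  have hc : (2 : ℝ) ^ (-q) < 1 := rpow_lt_one_of_one_lt_of_neg one_lt_two (by linarith)
  refine summable_finsupp_prod_pow (c := 2 ^ (-q)) (fun k => by positivity) (fun k => ?_) hc
    ((summable_nat_rpow.2 (by linarith)).mul_left _)
  exact mul_le_of_le_one_right (by positivity) (natCast_rpow_le_one_of_neg (by linarith) k)
end

section
/- For all real numbers x and t, the series ∑_{n=0}^∞ He_n(x)·tⁿ/n! converges absolutely and its sum equals exp(x·t − t²/2). -/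
/-!
Expanding `exp (x t) * exp (-t²/2)` as a product of two exponential series gives an absolutely
summable double series with terms `(x t)^m / m! * (-t²/2)^k / k!`. Grouping the pairs `(m, k)` with
`m + 2k = n` yields exactly `He_n(x) tⁿ / n!`, by the explicit formula
`He_n = ∑_k (-1)^k n! / (2^k k! (n-2k)!) X^(n-2k)`; absolute convergence of the grouped series
follows from that of the double series.
-/

open Polynomial Nat Finset

theorem Nat.factorial_two_mul (k : ℕ) : (2 * k)! = 2 ^ k * k ! * (2 * k - 1)‼ := by
  cases k with
  | zero => rfl
  | succ k =>
    rw [show 2 * (k + 1) = 2 * k + 1 + 1 by ring, factorial_eq_mul_doubleFactorial,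
      show 2 * k + 1 + 1 = 2 * (k + 1) by ring, doubleFactorial_two_mul]
    rfl

theorem Nat.doubleFactorial_mul_choose_two_mul {n k : ℕ} (h : 2 * k ≤ n) :
    (2 * k - 1)‼ * n.choose (2 * k) * (2 ^ k * k ! * (n - 2 * k)!) = n ! := by
  rw [← choose_mul_factorial_mul_factorial h, factorial_two_mul]
  ring

namespace Polynomial

theorem coeff_hermite_sub_two_mul {n k : ℕ} (h : 2 * k ≤ n) :
    (hermite n).coeff (n - 2 * k) = (-1) ^ k * (2 * k - 1)‼ * n.choose (2 * k) := by
  have := coeff_hermite_explicit k (n - 2 * k)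
  rwa [Nat.add_sub_cancel' h, choose_symm h] at this

theorem hermite_eq_sum_range (n : ℕ) :
    hermite n = ∑ k ∈ range (n / 2 + 1),
      C ((-1) ^ k * (2 * k - 1)‼ * n.choose (2 * k) : ℤ) * X ^ (n - 2 * k) := by
  have hinj : Set.InjOn (n - 2 * ·) (range (n / 2 + 1)) := by
    intro a ha b hb h
    simp only [coe_range, Set.mem_Iio] at ha hb h
    omega
  have hsub : (range (n / 2 + 1)).image (n - 2 * ·) ⊆ range (n + 1) := by
    intro i hi
    simp only [mem_image, mem_range] at hi ⊢
    omega
  have hvanish : ∀ i ∈ range (n + 1), i ∉ (range (n / 2 + 1)).image (n - 2 * ·) →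
      C ((hermite n).coeff i) * X ^ i = 0 := by
    intro i hi hni
    rw [coeff_hermite_of_odd_add, C_0, zero_mul]
    simp only [mem_image, mem_range, not_exists, not_and] at hi hni
    rw [Nat.odd_iff]
    by_contra heven
    exact hni ((n - i) / 2) (by omega) (by omega)
  calc hermite n = ∑ i ∈ range (n + 1), C ((hermite n).coeff i) * X ^ i :=
        as_sum_range_C_mul_X_pow' _ (by rw [natDegree_hermite]; exact n.lt_add_one)
    _ = ∑ i ∈ (range (n / 2 + 1)).image (n - 2 * ·), C ((hermite n).coeff i) * X ^ i :=
        (sum_subset hsub hvanish).symm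
    _ = _ := by
      rw [sum_image hinj]
      refine sum_congr rfl fun k hk => ?_
      rw [coeff_hermite_sub_two_mul (by have := mem_range.mp hk; omega)]

theorem aeval_hermite_mul_pow_div_factorial {K : Type*} [Field K] [CharZero K]
    (x t : K) (n : ℕ) :
    aeval x (hermite n) * t ^ n / n ! = ∑ k ∈ range (n / 2 + 1),
      (x * t) ^ (n - 2 * k) / (n - 2 * k)! * ((-(t ^ 2 / 2)) ^ k / k !) := by
  rw [hermite_eq_sum_range, map_sum, sum_mul, sum_div]
  refine sum_congr rfl fun k hk => ?_
  have h2k : 2 * k ≤ n := by have := mem_range.mp hk; omega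
  have hfact : ((2 * k - 1)‼ * n.choose (2 * k) : K) * (2 ^ k * k ! * (n - 2 * k)!) = n ! := by
    exact_mod_cast doubleFactorial_mul_choose_two_mul h2k
  have hpow : t ^ n = t ^ (n - 2 * k) * (t ^ 2) ^ k := by
    rw [← pow_mul, ← pow_add, Nat.sub_add_cancel h2k]
  have hneg : (-(t ^ 2 / 2)) ^ k = (-1) ^ k * (t ^ 2) ^ k / 2 ^ k := by
    rw [neg_pow, div_pow, mul_div_assoc]
  have hdf : ((2 * k - 1)‼ : K) ≠ 0 := Nat.cast_ne_zero.mpr (doubleFactorial_pos _).ne'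
  have hch : (n.choose (2 * k) : K) ≠ 0 := Nat.cast_ne_zero.mpr (choose_pos h2k).ne'
  rw [map_mul, aeval_C, aeval_X_pow, algebraMap_int_eq, eq_intCast, ← hfact, hpow, hneg]
  push_cast
  field_simp
  ring

end Polynomial

theorem Real.hasSum_pow_div_factorial_mul_pow_div_factorial (a b : ℝ) :
    HasSum (fun p : ℕ × ℕ => a ^ p.1 / p.1 ! * (b ^ p.2 / p.2 !)) (exp (a + b)) := by
  have hexp (c : ℝ) : HasSum (fun n : ℕ => c ^ n / (n ! : ℝ)) (exp c) := by
    rw [exp_eq_exp_ℝ]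
    exact NormedSpace.expSeries_div_hasSum_exp c
  have hnorm (c : ℝ) : Summable fun n : ℕ => ‖c ^ n / (n ! : ℝ)‖ :=
    (summable_pow_div_factorial c).norm
  -- elaborated on its own: as an argument of `HasSum.mul` its unification times out
  have hprod := summable_mul_of_summable_norm (hnorm a) (hnorm b)
  rw [exp_add]
  exact (hexp a).mul (hexp b) hprod

def Nat.addTwoMulEquiv : ℕ × ℕ ≃ Σ n : ℕ, Fin (n / 2 + 1) where
  toFun p := ⟨p.1 + 2 * p.2, ⟨p.2, by omega⟩⟩
  invFun q := (q.1 - 2 * q.2, q.2)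
  left_inv p := by simp
  right_inv := by
    rintro ⟨n, k, hk⟩
    have hn : n - 2 * k + 2 * k = n := Nat.sub_add_cancel (by omega)
    exact Sigma.ext hn ((Fin.heq_ext_iff (congrArg (· / 2 + 1) hn)).mpr rfl)

theorem HasSum.sum_fiber_add_two_mul {α : Type*} [AddCommMonoid α] [TopologicalSpace α]
    [ContinuousAdd α] [RegularSpace α] {f : ℕ × ℕ → α} {a : α} (hf : HasSum f a) :
    HasSum (fun n => ∑ k ∈ range (n / 2 + 1), f (n - 2 * k, k)) a := by
  have hsigma := (Nat.addTwoMulEquiv.symm.hasSum_iff.mpr hf).sigma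
    fun n => hasSum_fintype fun k : Fin (n / 2 + 1) => f (Nat.addTwoMulEquiv.symm ⟨n, k⟩)
  refine hsigma.congr_fun fun n => ?_
  exact (Fin.sum_univ_eq_sum_range (fun k => f (n - 2 * k, k)) _).symm

theorem Summable.abs_sum_fiber_add_two_mul {f : ℕ × ℕ → ℝ} (hf : Summable f) :
    Summable fun n => |∑ k ∈ range (n / 2 + 1), f (n - 2 * k, k)| :=
  hf.abs.hasSum.sum_fiber_add_two_mul.summable.of_nonneg_of_le (fun _ => abs_nonneg _)
    fun _ => abs_sum_le_sum_abs _ _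

/-- Generating function of the probabilists' Hermite polynomials: for all real `x, t`,
the series `∑_n He_n(x)·tⁿ/n!` converges absolutely with sum `exp(x·t - t²/2)`. -/
theorem hermite_generating_function (x t : ℝ) :
    (Summable fun n : ℕ =>
        |Polynomial.aeval x (Polynomial.hermite n) * t ^ n / (Nat.factorial n : ℝ)|)
    ∧ HasSum
        (fun n : ℕ => Polynomial.aeval x (Polynomial.hermite n) * t ^ n / (Nat.factorial n : ℝ))
        (Real.exp (x * t - t ^ 2 / 2)) := by
  have hprod := Real.hasSum_pow_div_factorial_mul_pow_div_factorial (x * t) (-(t ^ 2 / 2))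
  rw [← sub_eq_add_neg] at hprod
  simp only [aeval_hermite_mul_pow_div_factorial]
  exact ⟨hprod.summable.abs_sum_fiber_add_two_mul, hprod.sum_fiber_add_two_mul⟩
end
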